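/- Let (X,d) be an F-space (complete metric vector space with translation-invariant metric) with non-decreasing metric, and let {A_n} be an approximation scheme on X. If {A_n} fails Shapiro's theorem on X (i.e., there exists ε_n ↘ 0 such that for every x ∈ X there is C(x) > 0 with E(x,A_n) ≤ C(x)ε_n for all n), then there exists r_0 > 0 and a sequence δ_n ↘ 0 such that E(x,A_n) ≤ δ_n for all n ∈ ℕ and all x ∈ B(0,r_0). -/

import Mathlib

/-!
The sets `Γ_α = {x | E(x, A_n) ≤ α ε_n for all n}` are closed and, by hypothesis, cover `X`, so by
Baire one of them contains a ball `B(x₀, r)`. Since `A_n` is symmetric and `A_n + A_n ⊆ A_{K(n)}`,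
writing `x = (x + x₀) - x₀` gives `E(x, A_{K(n)}) ≤ 2α ε_n` for every `x ∈ B(0, r)`. Hence the
errors on that ball tend to zero uniformly, and their upper envelope is the required `δ`.
-/

open Filter Metric Pointwise Topology

theorem exists_antitone_tendsto_zero_ge {ι : Type*} (f : ι → ℕ → ℝ) {M : ℝ}
    (hf₀ : ∀ i j, 0 ≤ f i j) (hfM : ∀ i j, f i j ≤ M)
    (hlim : ∀ η > 0, ∃ N, ∀ j ≥ N, ∀ i, f i j ≤ η) :
    ∃ δ : ℕ → ℝ, (∀ n, 0 ≤ δ n) ∧ Antitone δ ∧ Tendsto δ atTop (𝓝 0) ∧ ∀ i j, f i j ≤ δ j := by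
  set δ : ℕ → ℝ := fun j => ⨆ p : ι × {k // j ≤ k}, f p.1 p.2.1
  have hbdd : ∀ j, BddAbove (Set.range fun p : ι × {k // j ≤ k} => f p.1 p.2.1) :=
    fun j => ⟨M, by rintro _ ⟨p, rfl⟩; exact hfM _ _⟩
  have hδ₀ : ∀ j, 0 ≤ δ j := fun j => Real.iSup_nonneg fun _ => hf₀ _ _
  have hle : ∀ i j k, j ≤ k → f i k ≤ δ j := fun i j k hjk => le_ciSup (hbdd j) (i, ⟨k, hjk⟩)
  refine ⟨δ, hδ₀, fun j j' hjj' => ?_, ?_, fun i j => hle i j j le_rfl⟩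
  · exact Real.iSup_le (fun p => hle p.1 j p.2 (hjj'.trans p.2.2)) (hδ₀ j)
  · refine Metric.tendsto_atTop.mpr fun η hη => ?_
    obtain ⟨N, hN⟩ := hlim (η / 2) (half_pos hη)
    refine ⟨N, fun j hj => ?_⟩
    have : δ j ≤ η / 2 :=
      Real.iSup_le (fun p => hN p.2 (hj.trans p.2.2) p.1) (half_pos hη).le
    rw [Real.dist_eq, sub_zero, abs_of_nonneg (hδ₀ j)]
    linarith

section IsometricAdd

variable {X : Type*} [AddGroup X] [PseudoMetricSpace X] [IsIsometricVAdd X X]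
  [IsIsometricVAdd Xᵃᵒᵖ X]

theorem infDist_neg_neg (x : X) (s : Set X) : infDist (-x) (-s) = infDist x s := by
  rw [← Set.image_neg_eq_neg, infDist_image isometry_neg]

theorem infDist_add_add_le (x y : X) (s t : Set X) :
    infDist (x + y) (s + t) ≤ infDist x s + infDist y t := by
  rcases s.eq_empty_or_nonempty with rfl | hs
  · simpa using infDist_nonneg
  rcases t.eq_empty_or_nonempty with rfl | ht
  · simpa using infDist_nonneg
  have hdist : ∀ a ∈ s, ∀ b ∈ t, infDist (x + y) (s + t) ≤ dist x a + dist y b := by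
    intro a ha b hb
    calc infDist (x + y) (s + t) ≤ dist (x + y) (a + b) :=
          infDist_le_dist_of_mem (Set.add_mem_add ha hb)
      _ ≤ dist (x + y) (a + y) + dist (a + y) (a + b) := dist_triangle _ _ _
      _ = dist x a + dist y b := by rw [dist_add_right, dist_add_left]
  have hy : ∀ a ∈ s, infDist (x + y) (s + t) - dist x a ≤ infDist y t := fun a ha =>
    (le_infDist ht).mpr fun b hb => by linarith [hdist a ha b hb]
  have hx : infDist (x + y) (s + t) - infDist y t ≤ infDist x s :=
    (le_infDist hs).mpr fun a ha => by linarith [hy a ha]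
  linarith

theorem infDist_le_of_add_self_subset {s t : Set X} (hs : s.Nonempty) (hneg : -s = s)
    (hst : s + s ⊆ t) (x y : X) : infDist x t ≤ infDist (x + y) s + infDist y s :=
  calc infDist x t ≤ infDist (x + y + -y) (s + -s) := by
        rw [add_neg_cancel_right, hneg]
        exact infDist_le_infDist_of_subset hst (hs.add hs)
    _ ≤ infDist (x + y) s + infDist (-y) (-s) := infDist_add_add_le _ _ _ _
    _ = infDist (x + y) s + infDist y s := by rw [infDist_neg_neg]

end IsometricAdd

section BalancedSet

variable {X : Type*} [AddCommGroup X] [Module ℝ X] {s : Set X}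

theorem zero_mem_of_smul_subset (hs : ∀ c : ℝ, c • s ⊆ s) (hne : s.Nonempty) : (0 : X) ∈ s :=
  hs 0 (by rw [Set.zero_smul_set hne]; rfl)

theorem neg_eq_of_smul_subset (hs : ∀ c : ℝ, c • s ⊆ s) : -s = s := by
  have hsub : -s ⊆ s := by simpa [Set.neg_smul_set] using hs (-1)
  exact hsub.antisymm (by simpa using Set.neg_subset_neg.mpr hsub)

theorem infDist_le_dist_zero_of_smul_subset [PseudoMetricSpace X] (hs : ∀ c : ℝ, c • s ⊆ s)
    (x : X) : infDist x s ≤ dist x 0 := by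
  rcases s.eq_empty_or_nonempty with rfl | hne
  · exact infDist_empty.trans_le dist_nonneg
  · exact infDist_le_dist_of_mem (zero_mem_of_smul_subset hs hne)

end BalancedSet

section ErrorBound

variable {X : Type*} [PseudoMetricSpace X] (A : ℕ → Set X) (ε : ℕ → ℝ)

/-- The set `Γ_α` of the paper. -/
def errorBoundSet (α : ℝ) : Set X := {x | ∀ n, infDist x (A n) ≤ α * ε n}

theorem isClosed_errorBoundSet (α : ℝ) : IsClosed (errorBoundSet A ε α) := by
  simp only [errorBoundSet, Set.ofPred_forall]
  exact isClosed_iInter fun n => isClosed_le (continuous_infDist_pt _) continuous_const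

theorem iUnion_errorBoundSet_eq_univ (hε : ∀ n, 0 ≤ ε n)
    (hfail : ∀ x : X, ∃ C : ℝ, 0 < C ∧ ∀ n, infDist x (A n) ≤ C * ε n) :
    ⋃ m : ℕ, errorBoundSet A ε m = Set.univ := by
  refine Set.eq_univ_of_forall fun x => Set.mem_iUnion.mpr ?_
  obtain ⟨C, -, hC⟩ := hfail x
  obtain ⟨m, hm⟩ := exists_nat_ge C
  exact ⟨m, fun n => (hC n).trans (mul_le_mul_of_nonneg_right hm (hε n))⟩

theorem exists_ball_subset_errorBoundSet [BaireSpace X] [Nonempty X] (hε : ∀ n, 0 ≤ ε n)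
    (hfail : ∀ x : X, ∃ C : ℝ, 0 < C ∧ ∀ n, infDist x (A n) ≤ C * ε n) :
    ∃ m : ℕ, ∃ x₀ : X, ∃ r > 0, ball x₀ r ⊆ errorBoundSet A ε m := by
  obtain ⟨m, x₀, hx₀⟩ := nonempty_interior_of_iUnion_of_closed
    (fun m : ℕ => isClosed_errorBoundSet A ε m)
    (iUnion_errorBoundSet_eq_univ A ε hε hfail)
  obtain ⟨r, hr, hball⟩ := Metric.isOpen_iff.mp isOpen_interior x₀ hx₀
  exact ⟨m, x₀, r, hr, hball.trans interior_subset⟩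

end ErrorBound

theorem infDist_le_two_mul_of_ball_subset_errorBoundSet {X : Type*} [AddCommGroup X]
    [Module ℝ X] [PseudoMetricSpace X] [IsIsometricVAdd X X] {A : ℕ → Set X} {K : ℕ → ℕ}
    {ε : ℕ → ℝ} (hmono : Monotone A) (hA1 : ∀ n, A n + A n ⊆ A (K n))
    (hA2 : ∀ (n : ℕ) (c : ℝ), c • A n ⊆ A n) {x₀ : X} {r α : ℝ}
    (hball : ball x₀ r ⊆ errorBoundSet A ε α) {n j : ℕ} (hn : (A n).Nonempty) (hj : K n ≤ j)
    {x : X} (hx : x ∈ ball (0 : X) r) : infDist x (A j) ≤ 2 * α * ε n := by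
  have hx₀ : x₀ ∈ errorBoundSet A ε α := hball (mem_ball_self (pos_of_mem_ball hx))
  have hxx₀ : x + x₀ ∈ errorBoundSet A ε α := hball <| by
    rwa [mem_ball, ← dist_add_right x 0 x₀, zero_add] at hx
  calc infDist x (A j) ≤ infDist x (A (K n)) :=
        infDist_le_infDist_of_subset (hmono hj) ((hn.add hn).mono (hA1 n))
    _ ≤ infDist (x + x₀) (A n) + infDist x₀ (A n) :=
        infDist_le_of_add_self_subset hn (neg_eq_of_smul_subset (hA2 n)) (hA1 n) x x₀
    _ ≤ 2 * α * ε n := by linarith [hxx₀ n, hx₀ n]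

theorem fails_shapiro_uniformly_on_ball_general {X : Type*} [AddCommGroup X] [Module ℝ X]
    [MetricSpace X] [CompleteSpace X]
    (hinv : ∀ x y z : X, dist (x + z) (y + z) = dist x y)
    (A : ℕ → Set X) (hchain : ∀ n, A n ⊆ A (n + 1))
    (K : ℕ → ℕ) (hA1 : ∀ n, A n + A n ⊆ A (K n))
    (hA2 : ∀ (n : ℕ) (c : ℝ), c • A n ⊆ A n)
    (hA3 : Dense (⋃ n, A n))
    (ε : ℕ → ℝ) (hεnonneg : ∀ n, 0 ≤ ε n)
    (hεlim : Tendsto ε atTop (nhds 0))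
    (hfail : ∀ x : X, ∃ C : ℝ, 0 < C ∧ ∀ n, infDist x (A n) ≤ C * ε n) :
    ∃ r₀ : ℝ, 0 < r₀ ∧ ∃ δ : ℕ → ℝ, (∀ n, 0 ≤ δ n) ∧ Antitone δ ∧
      Tendsto δ atTop (nhds 0) ∧
      ∀ n, ∀ x ∈ closedBall (0 : X) r₀, infDist x (A n) ≤ δ n := by
  have : IsIsometricVAdd X X :=
    ⟨fun c => Isometry.of_dist_eq fun x y => by simpa [add_comm c] using hinv x y c⟩
  obtain ⟨n₀, hn₀⟩ : ∃ n₀, (A n₀).Nonempty := by simpa using hA3.nonempty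
  have hmono : Monotone A := monotone_nat_of_le_succ hchain
  obtain ⟨m, x₀, r, hr, hball⟩ := exists_ball_subset_errorBoundSet A ε hεnonneg hfail
  have hdecay : ∀ n ≥ n₀, ∀ j ≥ K n, ∀ x ∈ closedBall (0 : X) (r / 2),
      infDist x (A j) ≤ 2 * m * ε n := fun n hn j hj x hx =>
    infDist_le_two_mul_of_ball_subset_errorBoundSet hmono hA1 hA2 hball (hn₀.mono (hmono hn)) hj
      (closedBall_subset_ball (half_lt_self hr) hx)
  obtain ⟨δ, hδ₀, hδanti, hδlim, hδ⟩ := exists_antitone_tendsto_zero_ge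
    (fun (x : closedBall (0 : X) (r / 2)) j => infDist (x : X) (A j)) (M := r / 2)
    (fun _ _ => infDist_nonneg)
    (fun x j => (infDist_le_dist_zero_of_smul_subset (hA2 j) x).trans (mem_closedBall.mp x.2))
    (fun η hη => by
      have hlim : Tendsto (fun n => 2 * m * ε n) atTop (𝓝 0) := by
        simpa using hεlim.const_mul (2 * (m : ℝ))
      obtain ⟨n, hεn, hn⟩ :=
        ((hlim.eventually (ge_mem_nhds hη)).and (eventually_ge_atTop n₀)).exists
      exact ⟨K n, fun j hj x => (hdecay n hn j hj x x.2).trans hεn⟩)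
  exact ⟨r / 2, half_pos hr, δ, hδ₀, hδanti, hδlim, fun n x hx => hδ ⟨x, hx⟩ n⟩

/-- In an F-space with non-decreasing translation-invariant metric,
if an approximation scheme `{A_n}` fails Shapiro's theorem (some `ε_n ↘ 0` dominates
all errors up to constants), then it fails it uniformly on some ball `B(0,r₀)`. -/
theorem fails_shapiro_uniformly_on_ball {X : Type*} [AddCommGroup X] [Module ℝ X]
    [MetricSpace X] [IsTopologicalAddGroup X] [ContinuousSMul ℝ X] [CompleteSpace X]
    (hinv : ∀ x y z : X, dist (x + z) (y + z) = dist x y)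
    (hnd : ∀ (α : ℝ) (x : X), 0 ≤ α → α ≤ 1 → dist (α • x) 0 ≤ dist x 0)
    (A : ℕ → Set X) (hchain : ∀ n, A n ⊆ A (n + 1))
    (K : ℕ → ℕ) (hK : ∀ n, n ≤ K n) (hA1 : ∀ n, A n + A n ⊆ A (K n))
    (hA2 : ∀ (n : ℕ) (c : ℝ), c • A n ⊆ A n)
    (hA3 : Dense (⋃ n, A n))
    (ε : ℕ → ℝ) (hεnonneg : ∀ n, 0 ≤ ε n) (hεanti : Antitone ε)
    (hεlim : Tendsto ε atTop (nhds 0))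
    (hfail : ∀ x : X, ∃ C : ℝ, 0 < C ∧ ∀ n, infDist x (A n) ≤ C * ε n) :
    ∃ r₀ : ℝ, 0 < r₀ ∧ ∃ δ : ℕ → ℝ, (∀ n, 0 ≤ δ n) ∧ Antitone δ ∧
      Tendsto δ atTop (nhds 0) ∧
      ∀ n, ∀ x ∈ closedBall (0 : X) r₀, infDist x (A n) ≤ δ n :=
  fails_shapiro_uniformly_on_ball_general hinv A hchain K hA1 hA2 hA3 ε hεnonneg hεlim hfail
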